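/- arXiv:2006.07575 — 6 statements merged into one kernel-verified Lean document; each statement's English description precedes it below -/
import Mathlib

section
/- Let W be an n×n real symmetric matrix with nonnegative entries whose weighted graph is connected (for every pair of distinct indices i, j there is a path i = i_0, i_1, …, i_k = j with w_{i_m i_{m+1}} > 0 for each m) and whose degrees d_i = Σ_{j=1}^n w_{ij} are all positive. Partition the indices into labelled indices {1, …, n_l} with n_l ≥ 1 and unlabelled indices {n_l+1, …, n} with n_u = n − n_l ≥ 1, and fix a ∈ ℝ. Then for every nonzero u ∈ ℝ^{n_u}, u^T D_u^{1+2a} L^{(a)}_{uu} u = (1/2) Σ_{i,j unlabelled} w_{ij} (d_i^a u_i − d_j^a u_j)² + Σ_{i unlabelled} d_i^{2a} u_i² (Σ_{m labelled} w_{im}) > 0; consequently the symmetric matrix D_u^{1+2a} L^{(a)}_{uu} = D_u^{1+2a} − D_u^a W_{uu} D_u^a is positive definite and L^{(a)}_{uu} is invertible. -/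
open Matrix BigOperators

/-- The unlabelled indices `{nl+1, …, n}`. -/
abbrev Unlab (n nl : ℕ) := {i : Fin n // nl ≤ i.val}

/-- The labelled indices `{1, …, nl}`. -/
abbrev Lab (n nl : ℕ) := {i : Fin n // i.val < nl}

/-- Inclusion of the unlabelled indices. -/
def unl (n nl : ℕ) : Unlab n nl → Fin n := Subtype.val

/-- The degree of node `i` in the weighted graph `W`. -/
noncomputable def deg (n : ℕ) (W : Matrix (Fin n) (Fin n) ℝ) (i : Fin n) : ℝ := ∑ j, W i j

/-- The a-normalized Laplacian `L⁽ᵃ⁾ = I - D^{-1-a} W D^a`. -/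
noncomputable def La (n : ℕ) (W : Matrix (Fin n) (Fin n) ℝ) (a : ℝ) :
    Matrix (Fin n) (Fin n) ℝ :=
  1 - Matrix.diagonal (fun i => deg n W i ^ (-1 - a)) * W *
    Matrix.diagonal (fun i => deg n W i ^ a)

/-!
The matrix `D_u^{1+2a} L^{(a)}_{uu}` is the congruence `D_u^a (D - W)_{uu} D_u^a` of the
unlabelled block of the combinatorial Laplacian. Splitting every degree into its unlabelled and
labelled parts, the quadratic form of that block at `v = D_u^a u` is
`½ Σ w_{ij} (v_i - v_j)² + Σ_i v_i² Σ_{m labelled} w_{im}`. If it vanishes, `v` is constant along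
the edges between unlabelled nodes and vanishes at every unlabelled node adjacent to a labelled
one, so walking along a path from an unlabelled node to a labelled node shows `v = 0`.
-/

section Laplacian

variable {ι : Type*} [Fintype ι] [DecidableEq ι]

theorem dotProduct_diagonal_rowSum_add_sub_mulVec {A : Matrix ι ι ℝ} (hA : A.IsSymm)
    (b v : ι → ℝ) :
    v ⬝ᵥ (diagonal (fun i => ∑ j, A i j + b i) - A) *ᵥ v
      = (1 / 2) * ∑ i, ∑ j, A i j * (v i - v j) ^ 2 + ∑ i, b i * v i ^ 2 := by
  have hdiag : v ⬝ᵥ diagonal (fun i => ∑ j, A i j + b i) *ᵥ v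
      = ∑ i, ∑ j, A i j * v i ^ 2 + ∑ i, b i * v i ^ 2 := by
    simp only [dotProduct, mulVec_diagonal, ← Finset.sum_mul, ← Finset.sum_add_distrib]
    exact Finset.sum_congr rfl fun i _ => by ring
  have hoff : v ⬝ᵥ A *ᵥ v = ∑ i, ∑ j, A i j * (v i * v j) := by
    simp only [dotProduct, mulVec, Finset.mul_sum]
    exact Finset.sum_congr rfl fun i _ => Finset.sum_congr rfl fun j _ => by ring
  have hswap : ∑ i, ∑ j, A i j * v j ^ 2 = ∑ i, ∑ j, A i j * v i ^ 2 := by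
    rw [Finset.sum_comm]
    simp only [hA.apply]
  have hexpand : ∑ i, ∑ j, A i j * (v i - v j) ^ 2
      = ∑ i, ∑ j, A i j * v i ^ 2 - 2 * ∑ i, ∑ j, A i j * (v i * v j)
        + ∑ i, ∑ j, A i j * v j ^ 2 := by
    simp only [Finset.mul_sum, ← Finset.sum_sub_distrib, ← Finset.sum_add_distrib]
    exact Finset.sum_congr rfl fun i _ => Finset.sum_congr rfl fun j _ => by ring
  rw [sub_mulVec, dotProduct_sub, hdiag, hoff, hexpand, hswap]
  ring

theorem dotProduct_diagonal_mul_mul_diagonal_mulVec (A : Matrix ι ι ℝ) (s v : ι → ℝ) :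
    v ⬝ᵥ (diagonal s * A * diagonal s) *ᵥ v = (s * v) ⬝ᵥ A *ᵥ (s * v) := by
  have hleft : v ᵥ* diagonal s = s * v := funext fun i => by
    rw [vecMul_diagonal, Pi.mul_apply, mul_comm]
  have hright : diagonal s *ᵥ v = s * v := funext fun i => mulVec_diagonal s v i
  rw [← mulVec_mulVec, ← mulVec_mulVec, dotProduct_mulVec, hleft, hright]

end Laplacian

section Grounded

variable {ι : Type*} (P : ι → Prop) {W : Matrix ι ι ℝ}

theorem eq_zero_of_path (v : ι → ℝ)
    (hedge : ∀ i j, P i → P j → 0 < W i j → v i = v j)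
    (hexit : ∀ i m, P i → ¬ P m → 0 < W i m → v i = 0) :
    ∀ (k : ℕ) (p : ℕ → ι), P (p 0) → ¬ P (p k) → (∀ m < k, 0 < W (p m) (p (m + 1))) →
      v (p 0) = 0 := by
  intro k
  induction k with
  | zero => exact fun p h0 hk _ => absurd h0 hk
  | succ k ih =>
    intro p h0 hk hpos
    by_cases h1 : P (p 1)
    · rw [hedge _ _ h0 h1 (hpos 0 k.succ_pos)]
      exact ih (fun m => p (m + 1)) h1 hk fun m hm => hpos (m + 1) (by omega)
    · exact hexit _ _ h0 h1 (hpos 0 k.succ_pos)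

variable [Fintype ι] [DecidablePred P]

theorem submatrix_laplacian_form_pos (hnn : ∀ i j, 0 ≤ W i j)
    (hconn : ∀ i j : ι, i ≠ j → ∃ (k : ℕ) (p : ℕ → ι),
      p 0 = i ∧ p k = j ∧ ∀ m < k, 0 < W (p m) (p (m + 1)))
    (hlab : ∃ m, ¬ P m) {v : {i // P i} → ℝ} (hv : v ≠ 0) :
    0 < (1 / 2) * ∑ i : {i // P i}, ∑ j : {i // P i}, W i j * (v i - v j) ^ 2
      + ∑ i : {i // P i}, (∑ m : {m // ¬ P m}, W i m) * v i ^ 2 := by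
  have hedge_nn : ∀ i j : {i // P i}, 0 ≤ W i j * (v i - v j) ^ 2 :=
    fun i j => mul_nonneg (hnn _ _) (sq_nonneg _)
  have hexit_nn : ∀ i : {i // P i}, 0 ≤ (∑ m : {m // ¬ P m}, W i m) * v i ^ 2 :=
    fun i => mul_nonneg (Finset.sum_nonneg fun _ _ => hnn _ _) (sq_nonneg _)
  have hS1 : 0 ≤ ∑ i : {i // P i}, ∑ j : {i // P i}, W i j * (v i - v j) ^ 2 :=
    Finset.sum_nonneg fun i _ => Finset.sum_nonneg fun j _ => hedge_nn i j
  have hS2 : 0 ≤ ∑ i : {i // P i}, (∑ m : {m // ¬ P m}, W i m) * v i ^ 2 :=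
    Finset.sum_nonneg fun i _ => hexit_nn i
  obtain ⟨i₀, hi₀⟩ := Function.ne_iff.mp hv
  obtain ⟨m₀, hm₀⟩ := hlab
  obtain ⟨k, p, hp0, hpk, hpath⟩ := hconn i₀ m₀ fun h => hm₀ (h ▸ i₀.2)
  have hjump : (∃ i j : {i // P i}, 0 < W i j ∧ v i ≠ v j) ∨
      ∃ (i : {i // P i}) (m : {m // ¬ P m}), 0 < W i m ∧ v i ≠ 0 := by
    by_contra! h
    let vext : ι → ℝ := fun i => if h : P i then v ⟨i, h⟩ else 0
    have hzero := eq_zero_of_path P vext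
      (fun i j hi hj hW => by simp only [vext, dif_pos hi, dif_pos hj]; exact h.1 _ _ hW)
      (fun i m hi hm hW => by simp only [vext, dif_pos hi]; exact h.2 ⟨i, hi⟩ ⟨m, hm⟩ hW)
      k p (hp0 ▸ i₀.2) (hpk ▸ hm₀) hpath
    exact hi₀ (by simpa [vext, hp0, i₀.2] using hzero)
  rcases hjump with ⟨i, j, hW, hne⟩ | ⟨i, m, hW, hne⟩
  · have hterm : 0 < W i j * (v i - v j) ^ 2 :=
      mul_pos hW (sq_pos_of_ne_zero (sub_ne_zero.mpr hne))
    have hle := (Finset.single_le_sum (fun j _ => hedge_nn i j) (Finset.mem_univ j)).trans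
      (Finset.single_le_sum (fun i _ => Finset.sum_nonneg fun j _ => hedge_nn i j)
        (Finset.mem_univ i))
    linarith
  · have hterm : 0 < (∑ m : {m // ¬ P m}, W i m) * v i ^ 2 :=
      mul_pos (hW.trans_le (Finset.single_le_sum (f := fun m : {m // ¬ P m} => W i m)
        (fun _ _ => hnn _ _) (Finset.mem_univ m))) (sq_pos_of_ne_zero hne)
    have hle := Finset.single_le_sum (fun i _ => hexit_nn i) (Finset.mem_univ i)
    linarith

variable [DecidableEq ι]

theorem submatrix_laplacian_eq :
    (diagonal (fun i => ∑ j, W i j) - W).submatrix Subtype.val (Subtype.val (p := P))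
      = diagonal (fun i : {i // P i} => ∑ j : {j // P j}, W i j + ∑ m : {m // ¬ P m}, W i m)
        - W.submatrix Subtype.val Subtype.val := by
  ext i j
  simp only [submatrix_apply, Matrix.sub_apply, diagonal_apply, Subtype.ext_iff,
    Fintype.sum_subtype_add_sum_subtype]

theorem posDef_submatrix_laplacian (hsym : W.IsSymm) (hnn : ∀ i j, 0 ≤ W i j)
    (hconn : ∀ i j : ι, i ≠ j → ∃ (k : ℕ) (p : ℕ → ι),
      p 0 = i ∧ p k = j ∧ ∀ m < k, 0 < W (p m) (p (m + 1)))
    (hlab : ∃ m, ¬ P m) :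
    ((diagonal (fun i => ∑ j, W i j) - W).submatrix Subtype.val (Subtype.val (p := P))).PosDef := by
  refine PosDef.of_dotProduct_mulVec_pos ?_ fun v hv => ?_
  · exact isHermitian_iff_isSymm.mpr (((isSymm_diagonal _).sub hsym).submatrix _)
  · have hform := dotProduct_diagonal_rowSum_add_sub_mulVec
      (hsym.submatrix (Subtype.val (p := P))) (fun i => ∑ m : {m // ¬ P m}, W i m) v
    simp only [submatrix_apply] at hform
    rw [star_trivial, submatrix_laplacian_eq, hform]
    exact submatrix_laplacian_form_pos P hnn hconn hlab hv

end Grounded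

section Normalized

variable {n nl : ℕ} {W : Matrix (Fin n) (Fin n) ℝ}

theorem diagonal_rpow_mul_La_submatrix (hdpos : ∀ i, 0 < deg n W i) (a : ℝ) :
    diagonal (fun i : Unlab n nl => deg n W i.1 ^ (1 + 2 * a)) *
        (La n W a).submatrix (unl n nl) (unl n nl)
      = diagonal (fun i : Unlab n nl => deg n W i.1 ^ (1 + 2 * a)) -
        diagonal (fun i : Unlab n nl => deg n W i.1 ^ a) * W.submatrix (unl n nl) (unl n nl) *
          diagonal (fun i : Unlab n nl => deg n W i.1 ^ a) := by
  have hpow : ∀ i, deg n W i ^ (1 + 2 * a) * deg n W i ^ (-1 - a) = deg n W i ^ a := fun i => by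
    rw [← Real.rpow_add (hdpos i)]
    ring_nf
  ext i j
  simp only [La, unl, diagonal_mul, mul_diagonal, submatrix_apply, Matrix.sub_apply,
    one_apply, diagonal_apply, Subtype.ext_iff]
  split_ifs <;> linear_combination (-(W i.1 j.1 * deg n W j.1 ^ a)) * hpow i.1

theorem diagonal_rpow_sub_eq_conj_laplacian (hdpos : ∀ i, 0 < deg n W i) (a : ℝ) :
    diagonal (fun i : Unlab n nl => deg n W i.1 ^ (1 + 2 * a)) -
        diagonal (fun i : Unlab n nl => deg n W i.1 ^ a) * W.submatrix (unl n nl) (unl n nl) *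
          diagonal (fun i : Unlab n nl => deg n W i.1 ^ a)
      = diagonal (fun i : Unlab n nl => deg n W i.1 ^ a) *
        (diagonal (fun i => ∑ j, W i j) - W).submatrix Subtype.val Subtype.val *
          diagonal (fun i : Unlab n nl => deg n W i.1 ^ a) := by
  have hpow : ∀ i, deg n W i ^ (1 + 2 * a) = deg n W i ^ a * deg n W i * deg n W i ^ a :=
    fun i => by
      rw [Real.rpow_add (hdpos i), Real.rpow_one, two_mul, Real.rpow_add (hdpos i)]
      ring
  ext i j
  simp only [unl, diagonal_mul, mul_diagonal, submatrix_apply, Matrix.sub_apply,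
    diagonal_apply, Subtype.ext_iff]
  split_ifs with h
  · rw [hpow, h, deg]
    ring
  · ring

theorem dotProduct_diagonal_rpow_mul_La_mulVec (hsym : W.IsSymm) (hdpos : ∀ i, 0 < deg n W i)
    (a : ℝ) (u : Unlab n nl → ℝ) :
    u ⬝ᵥ ((diagonal (fun i : Unlab n nl => deg n W i.1 ^ (1 + 2 * a)) *
        (La n W a).submatrix (unl n nl) (unl n nl)) *ᵥ u)
      = (1 / 2) * (∑ i : Unlab n nl, ∑ j : Unlab n nl,
          W i.1 j.1 * (deg n W i.1 ^ a * u i - deg n W j.1 ^ a * u j) ^ 2)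
        + ∑ i : Unlab n nl, deg n W i.1 ^ (2 * a) * u i ^ 2 * ∑ m : Lab n nl, W i.1 m.1 := by
  set s : Unlab n nl → ℝ := fun i => deg n W i.1 ^ a
  have hform := dotProduct_diagonal_rowSum_add_sub_mulVec
    (hsym.submatrix (Subtype.val (p := fun i : Fin n => nl ≤ i.val)))
    (fun i => ∑ m : {m : Fin n // ¬ nl ≤ m.val}, W i m) (s * u)
  simp only [submatrix_apply] at hform
  rw [diagonal_rpow_mul_La_submatrix hdpos, diagonal_rpow_sub_eq_conj_laplacian hdpos,
    dotProduct_diagonal_mul_mul_diagonal_mulVec, submatrix_laplacian_eq, hform]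
  congr 1
  refine Finset.sum_congr rfl fun i _ => ?_
  have hcompl : ∑ m : {m : Fin n // ¬ nl ≤ m.val}, W i m = ∑ m : Lab n nl, W i m.1 :=
    Fintype.sum_equiv (Equiv.subtypeEquivRight fun _ => not_le) _ _ fun _ => rfl
  rw [hcompl, Pi.mul_apply, two_mul, Real.rpow_add (hdpos _)]
  ring

end Normalized

/-- positivity of the quadratic form `uᵀ D_u^{1+2a} L⁽ᵃ⁾_{uu} u`, positive
definiteness of `D_u^{1+2a} - D_u^a W_{uu} D_u^a`, and invertibility of `L⁽ᵃ⁾_{uu}`, for a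
connected nonnegative symmetric similarity matrix with positive degrees. -/
theorem stmt0 (n nl : ℕ) (hnl : 1 ≤ nl) (hnu : nl < n)
    (W : Matrix (Fin n) (Fin n) ℝ) (hsym : W.IsSymm) (hnn : ∀ i j, 0 ≤ W i j)
    (hconn : ∀ i j : Fin n, i ≠ j → ∃ (k : ℕ) (p : ℕ → Fin n),
      p 0 = i ∧ p k = j ∧ ∀ m < k, 0 < W (p m) (p (m + 1)))
    (hdpos : ∀ i, 0 < deg n W i) (a : ℝ) :
    (∀ u : Unlab n nl → ℝ, u ≠ 0 →
      u ⬝ᵥ ((Matrix.diagonal (fun i : Unlab n nl => deg n W i.1 ^ (1 + 2 * a)) *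
          (La n W a).submatrix (unl n nl) (unl n nl)) *ᵥ u)
        = (1 / 2) * (∑ i : Unlab n nl, ∑ j : Unlab n nl,
            W i.1 j.1 * (deg n W i.1 ^ a * u i - deg n W j.1 ^ a * u j) ^ 2)
          + ∑ i : Unlab n nl,
              deg n W i.1 ^ (2 * a) * u i ^ 2 * ∑ m : Lab n nl, W i.1 m.1 ∧
      0 < u ⬝ᵥ ((Matrix.diagonal (fun i : Unlab n nl => deg n W i.1 ^ (1 + 2 * a)) *
          (La n W a).submatrix (unl n nl) (unl n nl)) *ᵥ u)) ∧
    (Matrix.diagonal (fun i : Unlab n nl => deg n W i.1 ^ (1 + 2 * a)) -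
      Matrix.diagonal (fun i : Unlab n nl => deg n W i.1 ^ a) *
        W.submatrix (unl n nl) (unl n nl) *
      Matrix.diagonal (fun i : Unlab n nl => deg n W i.1 ^ a)).PosDef ∧
    IsUnit ((La n W a).submatrix (unl n nl) (unl n nl)) := by
  have hL := posDef_submatrix_laplacian (fun i : Fin n => nl ≤ i.val) hsym hnn hconn
    ⟨⟨0, by omega⟩, by simp only [not_le]; omega⟩
  have hs : IsUnit (diagonal fun i : Unlab n nl => deg n W i.1 ^ a) :=
    isUnit_diagonal.mpr <| Pi.isUnit_iff.mpr fun i =>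
      (Real.rpow_pos_of_pos (hdpos _) a).ne'.isUnit
  have hPD := hL.conjTranspose_mul_mul_same (mulVec_injective_iff_isUnit.mpr hs)
  rw [diagonal_conjTranspose, star_trivial, ← diagonal_rpow_sub_eq_conj_laplacian hdpos,
    ← diagonal_rpow_mul_La_submatrix hdpos] at hPD
  refine ⟨fun u hu => ⟨dotProduct_diagonal_rpow_mul_La_mulVec hsym hdpos a u, ?_⟩, ?_,
    isUnit_of_mul_isUnit_right hPD.isUnit⟩
  · simpa only [star_trivial] using hPD.dotProduct_mulVec_pos hu
  · rwa [diagonal_rpow_mul_La_submatrix hdpos] at hPD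
end

section
/- Let Ŵ be an n×n real symmetric matrix partitioned into blocks Ŵ = [[Ŵ_{ll}, Ŵ_{lu}], [Ŵ_{ul}, Ŵ_{uu}]] according to a split n = n_l + n_u, fix f_l ∈ ℝ^{n_l}, let α > λ_max(Ŵ_{uu}), and set f* = (α I_{n_u} − Ŵ_{uu})^{−1} Ŵ_{ul} f_l. Then f* uniquely maximizes f_u ↦ [f_l; f_u]^T Ŵ [f_l; f_u] over the sphere {f_u ∈ ℝ^{n_u} : ‖f_u‖ = ‖f*‖}; that is, for every f_u with ‖f_u‖ = ‖f*‖ and f_u ≠ f*, [f_l; f_u]^T Ŵ [f_l; f_u] < [f_l; f*]^T Ŵ [f_l; f*]. -/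
/-!
Put `b = Ŵ_{ul} f_l` and `M = α I - Ŵ_{uu}`, which is positive definite because `α` exceeds
every eigenvalue of `Ŵ_{uu}`; thus `M f* = b`. By symmetry of `Ŵ` the objective is
`const + 2 ⟪f_u, b⟫ + f_uᵀ Ŵ_{uu} f_u`, and once `‖f_u‖ = ‖f*‖` its drop from `f*` to `f_u`
is exactly `(f* - f_u)ᵀ M (f* - f_u)`, which is positive for `f_u ≠ f*`.
-/

open Matrix

namespace Matrix

section Symmetric

variable {m n R : Type*} [Fintype m] [Fintype n] [CommSemiring R]

lemma IsSymm.dotProduct_mulVec_comm {A : Matrix n n R} (hA : A.IsSymm) (x y : n → R) :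
    x ⬝ᵥ (A *ᵥ y) = y ⬝ᵥ (A *ᵥ x) := by
  rw [dotProduct_mulVec, ← mulVec_transpose, hA, dotProduct_comm]

lemma IsSymm.sumElim_dotProduct_mulVec_sumElim {W : Matrix (m ⊕ n) (m ⊕ n) R} (hW : W.IsSymm)
    (x : m → R) (y : n → R) :
    Sum.elim x y ⬝ᵥ (W *ᵥ Sum.elim x y) =
      x ⬝ᵥ (W.toBlocks₁₁ *ᵥ x) + 2 * (y ⬝ᵥ (W.toBlocks₂₁ *ᵥ x)) + y ⬝ᵥ (W.toBlocks₂₂ *ᵥ y) := by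
  obtain ⟨-, -, h₂₁, -⟩ := isSymm_fromBlocks_iff.mp (by rwa [fromBlocks_toBlocks] : _)
  have hcross : x ⬝ᵥ (W.toBlocks₁₂ *ᵥ y) = y ⬝ᵥ (W.toBlocks₂₁ *ᵥ x) := by
    rw [← h₂₁, mulVec_transpose, dotProduct_mulVec, dotProduct_comm]
  conv_lhs => rw [← fromBlocks_toBlocks W]
  rw [fromBlocks_mulVec, sumElim_dotProduct_sumElim, dotProduct_add, dotProduct_add,
    Sum.elim_comp_inl, Sum.elim_comp_inr, hcross]
  ring

end Symmetric

section Shift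

variable {n R : Type*} [Fintype n] [DecidableEq n] [CommRing R]

lemma IsSymm.dotProduct_smul_one_sub_mulVec_sub {A : Matrix n n R} (hA : A.IsSymm) {α : R}
    {f v b : n → R} (hb : (α • 1 - A) *ᵥ f = b) (hv : v ⬝ᵥ v = f ⬝ᵥ f) :
    (f - v) ⬝ᵥ ((α • 1 - A) *ᵥ (f - v)) =
      (2 * (f ⬝ᵥ b) + f ⬝ᵥ (A *ᵥ f)) - (2 * (v ⬝ᵥ b) + v ⬝ᵥ (A *ᵥ v)) := by
  have hM : (α • 1 - A).IsSymm := (isSymm_one.smul α).sub hA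
  have hMx : ∀ x y : n → R, x ⬝ᵥ ((α • 1 - A) *ᵥ y) = α * (x ⬝ᵥ y) - x ⬝ᵥ (A *ᵥ y) := by
    intro x y
    rw [sub_mulVec, smul_mulVec, one_mulVec, dotProduct_sub, dotProduct_smul, smul_eq_mul]
  subst hb
  rw [mulVec_sub, dotProduct_sub, sub_dotProduct, sub_dotProduct,
    hM.dotProduct_mulVec_comm f v]
  simp only [hMx, hv]
  ring

lemma IsSymm.two_dotProduct_add_dotProduct_mulVec_lt {A : Matrix n n ℝ} (hA : A.IsSymm) {α : ℝ}
    (hM : (α • 1 - A).PosDef) {f v b : n → ℝ} (hb : (α • 1 - A) *ᵥ f = b)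
    (hv : v ⬝ᵥ v = f ⬝ᵥ f) (hne : v ≠ f) :
    2 * (v ⬝ᵥ b) + v ⬝ᵥ (A *ᵥ v) < 2 * (f ⬝ᵥ b) + f ⬝ᵥ (A *ᵥ f) := by
  have hpos := hM.dotProduct_mulVec_pos (sub_ne_zero.mpr hne.symm)
  rw [star_trivial, hA.dotProduct_smul_one_sub_mulVec_sub hb hv] at hpos
  linarith

end Shift

section Spectrum

open Unitary
open scoped ComplexOrder

variable {n 𝕜 : Type*} [Fintype n] [DecidableEq n] [RCLike 𝕜] {A : Matrix n n 𝕜}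

lemma IsHermitian.posDef_smul_one_sub (hA : A.IsHermitian) {α : ℝ}
    (hα : ∀ i, hA.eigenvalues i < α) : (α • (1 : Matrix n n 𝕜) - A).PosDef := by
  have hdiag : α • (1 : Matrix n n 𝕜) - diagonal (RCLike.ofReal ∘ hA.eigenvalues) =
      diagonal fun i ↦ ((α - hA.eigenvalues i : ℝ) : 𝕜) := by
    ext i j
    rcases eq_or_ne i j with rfl | hij <;> simp [*, RCLike.real_smul_eq_coe_mul]
  rw [hA.spectral_theorem]
  have hscalar : α • (1 : Matrix n n 𝕜) = conjStarAlgAut 𝕜 _ hA.eigenvectorUnitary (α • 1) := by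
    simp [conjStarAlgAut_apply]
  rw [hscalar, ← map_sub, hdiag]
  simp [conjStarAlgAut_apply, isUnit_coe.posDef_star_right_conjugate_iff, hα]

end Spectrum

end Matrix

/-- with `f* = (α I - Ŵ_{uu})⁻¹ Ŵ_{ul} f_l` for `α` above the largest
eigenvalue of `Ŵ_{uu}`, the vector `f*` is the unique maximizer of
`f_u ↦ [f_l; f_u]ᵀ Ŵ [f_l; f_u]` over the sphere `{f_u : ‖f_u‖ = ‖f*‖}`. -/
theorem stmt5 (nl nu : ℕ) (What : Matrix (Fin nl ⊕ Fin nu) (Fin nl ⊕ Fin nu) ℝ)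
    (hsym : What.IsSymm) (fl : Fin nl → ℝ) (α : ℝ)
    (hH : (What.toBlocks₂₂).IsHermitian)
    (hα : ∀ i, hH.eigenvalues i < α)
    (fstar : Fin nu → ℝ)
    (hfstar : fstar = (α • (1 : Matrix (Fin nu) (Fin nu) ℝ) - What.toBlocks₂₂)⁻¹ *ᵥ
      (What.toBlocks₂₁ *ᵥ fl)) :
    ∀ fu : Fin nu → ℝ, ∑ i, fu i ^ 2 = ∑ i, fstar i ^ 2 → fu ≠ fstar →
      Sum.elim fl fu ⬝ᵥ (What *ᵥ Sum.elim fl fu) <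
      Sum.elim fl fstar ⬝ᵥ (What *ᵥ Sum.elim fl fstar) := by
  intro fu hnorm hne
  have hM := hH.posDef_smul_one_sub hα
  have hb : (α • 1 - What.toBlocks₂₂) *ᵥ fstar = What.toBlocks₂₁ *ᵥ fl := by
    rw [hfstar, mulVec_mulVec, mul_nonsing_inv _ hM.det_pos.ne'.isUnit, one_mulVec]
  have hsphere : fu ⬝ᵥ fu = fstar ⬝ᵥ fstar := by
    simpa only [dotProduct, sq] using hnorm
  rw [hsym.sumElim_dotProduct_mulVec_sumElim, hsym.sumElim_dotProduct_mulVec_sumElim]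
  have := (isHermitian_iff_isSymm.mp hH).two_dotProduct_add_dotProduct_mulVec_lt hM hb hsphere hne
  linarith
end

section
/- Let p be a positive integer and C a real symmetric positive definite p×p matrix with largest eigenvalue λ_max(C). Then the function q(ξ) = (ξ²/p) · tr( ((I_p − ξ C)^{−1} C)² ) is positive and strictly increasing on the interval (0, 1/λ_max(C)). -/
open Matrix BigOperators

/-- The resolvent `(I_p - ξ C)⁻¹`. -/
noncomputable def resolv (p : ℕ) (C : Matrix (Fin p) (Fin p) ℝ) (ξ : ℝ) :
    Matrix (Fin p) (Fin p) ℝ :=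
  ((1 : Matrix (Fin p) (Fin p) ℝ) - ξ • C)⁻¹

/-- `θ(ξ) = ρ₁ ρ₂ ξ vᵀ (I - ξC)⁻¹ v`. -/
noncomputable def theta (p : ℕ) (C : Matrix (Fin p) (Fin p) ℝ) (v : Fin p → ℝ)
    (ρ1 ρ2 ξ : ℝ) : ℝ :=
  ρ1 * ρ2 * ξ * (v ⬝ᵥ (resolv p C ξ *ᵥ v))

/-- `q(ξ) = (ξ²/p) tr( ((I - ξC)⁻¹ C)² )`. -/
noncomputable def qfun (p : ℕ) (C : Matrix (Fin p) (Fin p) ℝ) (ξ : ℝ) : ℝ :=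
  ξ ^ 2 / p * Matrix.trace ((resolv p C ξ * C) ^ 2)

/-- `s(ξ) = ρ₁ ρ₂ ξ² vᵀ (I - ξC)⁻¹ C (I - ξC)⁻¹ v`. -/
noncomputable def sfun (p : ℕ) (C : Matrix (Fin p) (Fin p) ℝ) (v : Fin p → ℝ)
    (ρ1 ρ2 ξ : ℝ) : ℝ :=
  ρ1 * ρ2 * ξ ^ 2 * (v ⬝ᵥ ((resolv p C ξ * C * resolv p C ξ) *ᵥ v))

/-- `m(ξ) = 2 c_l θ(ξ) / (c_u (1 - θ(ξ)))`. -/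
noncomputable def mfun (p : ℕ) (C : Matrix (Fin p) (Fin p) ℝ) (v : Fin p → ℝ)
    (ρ1 ρ2 cl cu ξ : ℝ) : ℝ :=
  2 * cl * theta p C v ρ1 ρ2 ξ / (cu * (1 - theta p C v ρ1 ρ2 ξ))

/-- `σ²(ξ) = [ρ₁ρ₂ (2c_l + m(ξ)c_u)² s(ξ) + ρ₁ρ₂ (4c_l + m(ξ)²c_u) q(ξ)] / (c_u (c_u - q(ξ)))`. -/
noncomputable def sigma2 (p : ℕ) (C : Matrix (Fin p) (Fin p) ℝ) (v : Fin p → ℝ)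
    (ρ1 ρ2 cl cu ξ : ℝ) : ℝ :=
  (ρ1 * ρ2 * (2 * cl + mfun p C v ρ1 ρ2 cl cu ξ * cu) ^ 2 * sfun p C v ρ1 ρ2 ξ
    + ρ1 * ρ2 * (4 * cl + (mfun p C v ρ1 ρ2 cl cu ξ) ^ 2 * cu) * qfun p C ξ)
  / (cu * (cu - qfun p C ξ))

/-!
Diagonalising `C = U diag(λᵢ) Uᵀ` gives `q(ξ) = (1/p) ∑ᵢ (ξλᵢ / (1 - ξλᵢ))²`. On
`(0, 1/λ_max)` every `1 - ξλᵢ` is positive, and each `ξλ / (1 - ξλ)` is positive and strictly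
increasing there, so the same holds for the sum.
-/

open Set

namespace Matrix.IsHermitian

variable {n 𝕜 : Type*} [Fintype n] [DecidableEq n] [RCLike 𝕜] {A : Matrix n n 𝕜}

theorem trace_cfc (hA : A.IsHermitian) (f : ℝ → ℝ) :
    (cfc f A).trace = ∑ i, (f (hA.eigenvalues i) : 𝕜) := by
  rw [hA.cfc_eq, IsHermitian.cfc, Unitary.conjStarAlgAut_apply, trace_mul_cycle,
    Unitary.coe_star_mul_self, one_mul, trace_diagonal]
  rfl

theorem one_sub_smul_inv_mul_self_sq (hA : A.IsHermitian) {ξ : ℝ}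
    (hξ : ∀ i, 1 - ξ * hA.eigenvalues i ≠ 0) :
    ((1 - ξ • A)⁻¹ * A) ^ 2 = cfc (fun x => (x / (1 - ξ * x)) ^ 2) A := by
  have hcont (f : ℝ → ℝ) : ContinuousOn f (spectrum ℝ A) := A.finite_real_spectrum.continuousOn f
  have hspec : ∀ x ∈ spectrum ℝ A, 1 - ξ * x ≠ 0 := by
    rw [hA.spectrum_real_eq_range_eigenvalues]
    rintro _ ⟨i, rfl⟩
    exact hξ i
  have hsub : 1 - ξ • A = cfc (fun x => 1 - ξ * x) A := by
    rw [cfc_sub (R := ℝ) (fun _ => 1) (fun x => ξ * x) A, cfc_const_one ℝ A,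
      cfc_const_mul ξ (fun x => x) A (hcont _), cfc_id' ℝ A]
  have hres : (1 - ξ • A)⁻¹ * A = cfc (fun x => x / (1 - ξ * x)) A := by
    rw [nonsing_inv_eq_ringInverse, hsub, ← cfc_inv _ _ hspec (hcont _)]
    conv_lhs => rhs; rw [← cfc_id' ℝ A]
    rw [← cfc_mul _ _ _ (hcont _) (hcont _)]
    simp_rw [div_eq_inv_mul]
  rw [hres, cfc_pow _ _ _ (hcont _)]

end Matrix.IsHermitian

theorem qfun_eq_sum_eigenvalues {p : ℕ} {C : Matrix (Fin p) (Fin p) ℝ} (hC : C.IsHermitian)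
    {ξ : ℝ} (hξ : ∀ i, 1 - ξ * hC.eigenvalues i ≠ 0) :
    qfun p C ξ = (∑ i, (ξ * hC.eigenvalues i / (1 - ξ * hC.eigenvalues i)) ^ 2) / p := by
  rw [qfun, resolv, hC.one_sub_smul_inv_mul_self_sq hξ, hC.trace_cfc, Finset.mul_sum,
    Finset.sum_div]
  refine Finset.sum_congr rfl fun i _ => ?_
  rw [RCLike.ofReal_real_eq_id, id]
  ring

theorem one_sub_mul_pos_of_lt_inv {l ξ : ℝ} (hl : 0 < l) (hξ : ξ < l⁻¹) : 0 < 1 - ξ * l := by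
  have := (lt_div_iff₀ hl).1 (by rwa [one_div])
  linarith

theorem mul_div_one_sub_mul_pos {l ξ : ℝ} (hl : 0 < l) (hξ : ξ ∈ Ioo 0 l⁻¹) :
    0 < ξ * l / (1 - ξ * l) :=
  div_pos (mul_pos hξ.1 hl) (one_sub_mul_pos_of_lt_inv hl hξ.2)

theorem strictMonoOn_sq_mul_div_one_sub_mul {l : ℝ} (hl : 0 < l) :
    StrictMonoOn (fun ξ => (ξ * l / (1 - ξ * l)) ^ 2) (Ioo 0 l⁻¹) := by
  intro a ha b hb hab
  have hda := one_sub_mul_pos_of_lt_inv hl ha.2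
  have hdb := one_sub_mul_pos_of_lt_inv hl hb.2
  dsimp only
  gcongr ?_ ^ 2
  · exact (mul_div_one_sub_mul_pos hl ha).le
  · rw [div_lt_div_iff₀ hda hdb]
    nlinarith

/-- `q(ξ) = (ξ²/p) tr(((I - ξC)⁻¹ C)²)` is positive and strictly increasing
on `(0, 1/λ_max(C))`, for `C` symmetric positive definite. -/
theorem stmt11 (p : ℕ) (hp : 0 < p) (C : Matrix (Fin p) (Fin p) ℝ) (hC : C.PosDef)
    (lmax : ℝ) (hlmax : IsGreatest (Set.range hC.1.eigenvalues) lmax) :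
    (∀ ξ ∈ Set.Ioo (0 : ℝ) lmax⁻¹, 0 < qfun p C ξ) ∧
    StrictMonoOn (qfun p C) (Set.Ioo (0 : ℝ) lmax⁻¹) := by
  have : Nonempty (Fin p) := ⟨⟨0, hp⟩⟩
  set μ := hC.1.eigenvalues
  have hμ : ∀ i, 0 < μ i := hC.eigenvalues_pos
  have hsub : ∀ i, Ioo 0 lmax⁻¹ ⊆ Ioo 0 (μ i)⁻¹ := fun i =>
    Ioo_subset_Ioo_right (inv_anti₀ (hμ i) (hlmax.2 ⟨i, rfl⟩))
  have hq : ∀ ξ ∈ Ioo 0 lmax⁻¹, qfun p C ξ = (∑ i, (ξ * μ i / (1 - ξ * μ i)) ^ 2) / p :=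
    fun ξ hξ => qfun_eq_sum_eigenvalues hC.1 fun i =>
      (one_sub_mul_pos_of_lt_inv (hμ i) (hsub i hξ).2).ne'
  refine ⟨fun ξ hξ => ?_, fun a ha b hb hab => ?_⟩
  · rw [hq ξ hξ]
    have hterm (i : Fin p) : 0 < (ξ * μ i / (1 - ξ * μ i)) ^ 2 :=
      pow_pos (mul_div_one_sub_mul_pos (hμ i) (hsub i hξ)) 2
    exact div_pos (Finset.sum_pos (fun i _ => hterm i) Finset.univ_nonempty) (Nat.cast_pos.2 hp)
  · rw [hq a ha, hq b hb]
    gcongr ?_ / _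
    exact Finset.sum_lt_sum_of_nonempty Finset.univ_nonempty fun i _ =>
      strictMonoOn_sq_mul_div_one_sub_mul (hμ i) (hsub i ha) (hsub i hb) hab
end

section
/- Let p be a positive integer, C a real symmetric positive definite p×p matrix with largest eigenvalue λ_max(C), v ∈ ℝ^p a nonzero vector, and ρ_1, ρ_2 > 0. Then the function s(ξ) = ρ_1 ρ_2 ξ² v^T (I_p − ξ C)^{−1} C (I_p − ξ C)^{−1} v is positive and strictly increasing on the interval (0, 1/λ_max(C)). -/
open Matrix BigOperators

/-!
Diagonalising `C = U diag(λ) Uᵀ` turns `s` into `ρ₁ρ₂ ∑ᵢ λᵢ wᵢ² (ξ / (1 - ξλᵢ))²` with `w = Uᵀv`.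
On `(0, 1/λ_max)` every `1 - ξλᵢ` is positive, so each `ξ / (1 - ξλᵢ)` is positive and strictly
increasing, and some weight `λᵢwᵢ²` is positive because `v ≠ 0`.
-/

namespace Matrix

variable {n : Type*} [Fintype n] [DecidableEq n]

theorem dotProduct_conjStarAlgAut_diagonal_mulVec (U : unitary (Matrix n n ℝ)) (d : n → ℝ)
    (v : n → ℝ) :
    v ⬝ᵥ (Unitary.conjStarAlgAut ℝ _ U (diagonal d) *ᵥ v)
      = ∑ i, d i * ((star U : Matrix n n ℝ) *ᵥ v) i ^ 2 := by
  have hvU : v ᵥ* (U : Matrix n n ℝ) = (star U : Matrix n n ℝ) *ᵥ v := by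
    rw [star_eq_conjTranspose, conjTranspose_eq_transpose_of_trivial, mulVec_transpose]
  rw [Unitary.conjStarAlgAut_apply, ← mulVec_mulVec, ← mulVec_mulVec, dotProduct_mulVec, hvU,
    dotProduct]
  simp only [mulVec_diagonal]
  exact Finset.sum_congr rfl fun i _ => by ring

namespace IsHermitian

variable {A : Matrix n n ℝ} (hA : A.IsHermitian)

local notation "φ" => Unitary.conjStarAlgAut ℝ (Matrix n n ℝ) hA.eigenvectorUnitary

theorem eq_conjStarAlgAut_diagonal : A = φ (diagonal hA.eigenvalues) := hA.spectral_theorem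

theorem inv_one_sub_smul_eq {ξ : ℝ} (hξ : ∀ i, 1 - ξ * hA.eigenvalues i ≠ 0) :
    (1 - ξ • A)⁻¹ = φ (diagonal fun i => (1 - ξ * hA.eigenvalues i)⁻¹) := by
  have h : 1 - ξ • A = φ (diagonal fun i => 1 - ξ * hA.eigenvalues i) := by
    conv_lhs => rw [hA.eq_conjStarAlgAut_diagonal]
    rw [← map_smul, ← map_one φ, ← map_sub]
    congr 1
    ext i j
    by_cases h : i = j <;> simp [h]
  refine inv_eq_left_inv ?_
  rw [h, ← map_mul, diagonal_mul_diagonal]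
  simp [hξ]

theorem inv_one_sub_smul_mul_mul_inv_eq {ξ : ℝ} (hξ : ∀ i, 1 - ξ * hA.eigenvalues i ≠ 0) :
    (1 - ξ • A)⁻¹ * A * (1 - ξ • A)⁻¹
      = φ (diagonal fun i => hA.eigenvalues i / (1 - ξ * hA.eigenvalues i) ^ 2) := by
  calc (1 - ξ • A)⁻¹ * A * (1 - ξ • A)⁻¹
      = φ (diagonal fun i => (1 - ξ * hA.eigenvalues i)⁻¹) * φ (diagonal hA.eigenvalues)
          * φ (diagonal fun i => (1 - ξ * hA.eigenvalues i)⁻¹) := by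
        rw [hA.inv_one_sub_smul_eq hξ, ← hA.eq_conjStarAlgAut_diagonal]
    _ = _ := by
        rw [← map_mul, ← map_mul, diagonal_mul_diagonal, diagonal_mul_diagonal]
        congr 2
        ext i
        field_simp

end IsHermitian
end Matrix

theorem sfun_eq_sum {p : ℕ} {C : Matrix (Fin p) (Fin p) ℝ} (hC : C.IsHermitian) (v : Fin p → ℝ)
    (ρ1 ρ2 : ℝ) {ξ : ℝ} (hξ : ∀ i, 1 - ξ * hC.eigenvalues i ≠ 0) :
    sfun p C v ρ1 ρ2 ξ = ∑ i, ρ1 * ρ2 * hC.eigenvalues i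
      * ((star hC.eigenvectorUnitary : Matrix (Fin p) (Fin p) ℝ) *ᵥ v) i ^ 2
      * (ξ / (1 - ξ * hC.eigenvalues i)) ^ 2 := by
  rw [sfun, resolv, hC.inv_one_sub_smul_mul_mul_inv_eq hξ,
    dotProduct_conjStarAlgAut_diagonal_mulVec, Finset.mul_sum]
  refine Finset.sum_congr rfl fun i _ => ?_
  rw [div_pow]
  ring

theorem one_sub_mul_pos_of_mem_Ioo {ξ l lmax : ℝ} (hl : l ≤ lmax) (hξ : ξ ∈ Set.Ioo 0 lmax⁻¹) :
    0 < 1 - ξ * l := by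
  obtain ⟨hξ0, hξl⟩ := hξ
  have hlmax : 0 < lmax := inv_pos.mp (hξ0.trans hξl)
  have : ξ * lmax < 1 := (lt_inv_mul_iff₀' hlmax).mp (by rwa [mul_one])
  nlinarith

theorem strictMonoOn_div_one_sub_mul_sq {l lmax : ℝ} (hl : l ≤ lmax) :
    StrictMonoOn (fun ξ => (ξ / (1 - ξ * l)) ^ 2) (Set.Ioo 0 lmax⁻¹) := by
  intro ξ₁ hξ₁ ξ₂ hξ₂ hlt
  have h₁ := one_sub_mul_pos_of_mem_Ioo hl hξ₁
  have h₂ := one_sub_mul_pos_of_mem_Ioo hl hξ₂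
  have hlt' : ξ₁ / (1 - ξ₁ * l) < ξ₂ / (1 - ξ₂ * l) := by
    rw [div_lt_div_iff₀ h₁ h₂]
    linarith
  exact pow_lt_pow_left₀ hlt' (div_pos hξ₁.1 h₁).le two_ne_zero

theorem strictMonoOn_sum_mul {α ι : Type*} [Preorder α] [Fintype ι] {s : Set α} {c : ι → ℝ}
    {f : ι → α → ℝ} (hc : ∀ i, 0 ≤ c i) (hc₀ : ∃ i, 0 < c i) (hf : ∀ i, StrictMonoOn (f i) s) :
    StrictMonoOn (fun x => ∑ i, c i * f i x) s := by
  intro x hx y hy hxy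
  obtain ⟨i₀, hi₀⟩ := hc₀
  exact Finset.sum_lt_sum (fun i _ => mul_le_mul_of_nonneg_left (hf i hx hy hxy).le (hc i))
    ⟨i₀, Finset.mem_univ _, mul_lt_mul_of_pos_left (hf i₀ hx hy hxy) hi₀⟩

theorem stmt12_general (p : ℕ) (C : Matrix (Fin p) (Fin p) ℝ) (hC : C.PosDef)
    (lmax : ℝ) (hlmax : IsGreatest (Set.range hC.1.eigenvalues) lmax)
    (v : Fin p → ℝ) (hv : v ≠ 0) (ρ1 ρ2 : ℝ) (hρ1 : 0 < ρ1) (hρ2 : 0 < ρ2) :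
    (∀ ξ ∈ Set.Ioo (0 : ℝ) lmax⁻¹, 0 < sfun p C v ρ1 ρ2 ξ) ∧
    StrictMonoOn (sfun p C v ρ1 ρ2) (Set.Ioo (0 : ℝ) lmax⁻¹) := by
  set w : Fin p → ℝ := (star hC.1.eigenvectorUnitary : Matrix (Fin p) (Fin p) ℝ) *ᵥ v
  set c : Fin p → ℝ := fun i => ρ1 * ρ2 * hC.1.eigenvalues i * w i ^ 2
  have hle (i : Fin p) : hC.1.eigenvalues i ≤ lmax := hlmax.2 ⟨i, rfl⟩
  have hs : Set.EqOn (sfun p C v ρ1 ρ2)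
      (fun ξ => ∑ i, c i * (ξ / (1 - ξ * hC.1.eigenvalues i)) ^ 2) (Set.Ioo 0 lmax⁻¹) :=
    fun ξ hξ => sfun_eq_sum hC.1 v ρ1 ρ2 fun i => (one_sub_mul_pos_of_mem_Ioo (hle i) hξ).ne'
  have hc (i : Fin p) : 0 ≤ c i := by
    have := (hC.eigenvalues_pos i).le
    positivity
  obtain ⟨i₀, hi₀⟩ : ∃ i, 0 < c i := by
    have hw : w ≠ 0 := by
      simpa using (mulVec_injective_of_isUnit
        (Unitary.isUnit_coe (U := star hC.1.eigenvectorUnitary))).ne hv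
    obtain ⟨i, hi⟩ := Function.ne_iff.mp hw
    exact ⟨i, mul_pos (mul_pos (mul_pos hρ1 hρ2) (hC.eigenvalues_pos i)) (sq_pos_of_ne_zero hi)⟩
  refine ⟨fun ξ hξ => ?_, (strictMonoOn_sum_mul hc ⟨i₀, hi₀⟩
    fun i => strictMonoOn_div_one_sub_mul_sq (hle i)).congr hs.symm⟩
  rw [hs hξ]
  refine Finset.sum_pos' (fun i _ => mul_nonneg (hc i) (sq_nonneg _)) ⟨i₀, Finset.mem_univ _, ?_⟩
  exact mul_pos hi₀ (pow_pos (div_pos hξ.1 (one_sub_mul_pos_of_mem_Ioo (hle i₀) hξ)) 2)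

/-- `s(ξ) = ρ₁ ρ₂ ξ² vᵀ (I - ξC)⁻¹ C (I - ξC)⁻¹ v` is positive and strictly
increasing on `(0, 1/λ_max(C))`, for `C` symmetric positive definite, `v ≠ 0`, `ρ₁, ρ₂ > 0`. -/
theorem stmt12 (p : ℕ) (hp : 0 < p) (C : Matrix (Fin p) (Fin p) ℝ) (hC : C.PosDef)
    (lmax : ℝ) (hlmax : IsGreatest (Set.range hC.1.eigenvalues) lmax)
    (v : Fin p → ℝ) (hv : v ≠ 0) (ρ1 ρ2 : ℝ) (hρ1 : 0 < ρ1) (hρ2 : 0 < ρ2) :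
    (∀ ξ ∈ Set.Ioo (0 : ℝ) lmax⁻¹, 0 < sfun p C v ρ1 ρ2 ξ) ∧
    StrictMonoOn (sfun p C v ρ1 ρ2) (Set.Ioo (0 : ℝ) lmax⁻¹) :=
  stmt12_general p C hC lmax hlmax v hv ρ1 ρ2 hρ1 hρ2
end

section
/- Let p be a positive integer, C a real symmetric positive definite p×p matrix, Δ ∈ ℝ^p nonzero, ρ_1, ρ_2 > 0 and c_l, c_u > 0. With θ(ξ) = ρ_1 ρ_2 ξ Δ^T (I_p − ξ C)^{−1} Δ, q(ξ) = (ξ²/p) tr(((I_p − ξ C)^{−1} C)²), s(ξ) = ρ_1 ρ_2 ξ² Δ^T (I_p − ξ C)^{−1} C (I_p − ξ C)^{−1} Δ, m(ξ) = 2 c_l θ(ξ)/(c_u (1 − θ(ξ))), and σ²(ξ) = [ρ_1 ρ_2 (2 c_l + m(ξ) c_u)² s(ξ) + ρ_1 ρ_2 (4 c_l + m(ξ)² c_u) q(ξ)] / (c_u (c_u − q(ξ))), the ratio σ²(ξ)/m(ξ)² converges, as ξ → 0⁺, to Δ^T C Δ / ‖Δ‖⁴ + tr(C²) / (p ‖Δ‖⁴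 ρ_1 ρ_2 c_l). -/
open Matrix BigOperators

/-!
Both `m` and `σ²` vanish at `ξ = 0` to the right order: `m(ξ) = ξ M(ξ)` and `σ²(ξ) = ξ² S(ξ)`,
where `M` and `S` are built from the resolvent `(I - ξC)⁻¹` by continuous operations and are
therefore continuous at `0`. Hence `σ²/m² = S/M²` off `0`, and the limit is `S(0)/M(0)²`, read off
from `(I - 0 • C)⁻¹ = I`.
-/

open Filter Topology

theorem continuousAt_resolv {p : ℕ} {C : Matrix (Fin p) (Fin p) ℝ} {ξ : ℝ}
    (h : IsUnit (1 - ξ • C).det) : ContinuousAt (resolv p C) ξ := by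
  refine (continuousAt_matrix_inv _ ?_).comp
    (by fun_prop : Continuous fun ξ : ℝ => 1 - ξ • C).continuousAt
  rw [Ring.inverse_eq_inv']
  exact continuousAt_inv₀ h.ne_zero

@[simp]
theorem resolv_zero (p : ℕ) (C : Matrix (Fin p) (Fin p) ℝ) : resolv p C 0 = 1 := by
  simp [resolv]

theorem tendsto_sq_mul_div_mul_sq {f g : ℝ → ℝ} (hf : ContinuousAt f 0) (hg : ContinuousAt g 0)
    (hg0 : g 0 ≠ 0) :
    Tendsto (fun ξ => ξ ^ 2 * f ξ / (ξ * g ξ) ^ 2) (𝓝[≠] 0) (𝓝 (f 0 / g 0 ^ 2)) := by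
  have hlim : ContinuousAt (fun ξ => f ξ / g ξ ^ 2) 0 := hf.div (hg.pow 2) (pow_ne_zero 2 hg0)
  refine hlim.tendsto.mono_left nhdsWithin_le_nhds |>.congr' ?_
  filter_upwards [self_mem_nhdsWithin] with ξ (hξ : ξ ≠ 0)
  rw [mul_pow, mul_div_mul_left _ _ (pow_ne_zero 2 hξ)]

noncomputable def mfunSlope (p : ℕ) (C : Matrix (Fin p) (Fin p) ℝ) (v : Fin p → ℝ)
    (ρ1 ρ2 cl cu ξ : ℝ) : ℝ :=
  2 * cl * (ρ1 * ρ2 * (v ⬝ᵥ (resolv p C ξ *ᵥ v))) / (cu * (1 - theta p C v ρ1 ρ2 ξ))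

noncomputable def sigma2Coeff (p : ℕ) (C : Matrix (Fin p) (Fin p) ℝ) (v : Fin p → ℝ)
    (ρ1 ρ2 cl cu ξ : ℝ) : ℝ :=
  (ρ1 * ρ2 * (2 * cl + mfun p C v ρ1 ρ2 cl cu ξ * cu) ^ 2
      * (ρ1 * ρ2 * (v ⬝ᵥ ((resolv p C ξ * C * resolv p C ξ) *ᵥ v)))
    + ρ1 * ρ2 * (4 * cl + mfun p C v ρ1 ρ2 cl cu ξ ^ 2 * cu)
      * (trace ((resolv p C ξ * C) ^ 2) / p))
  / (cu * (cu - qfun p C ξ))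

section

variable (p : ℕ) (C : Matrix (Fin p) (Fin p) ℝ) (v : Fin p → ℝ) (ρ1 ρ2 cl cu : ℝ)

theorem mfun_eq_mul_mfunSlope (ξ : ℝ) :
    mfun p C v ρ1 ρ2 cl cu ξ = ξ * mfunSlope p C v ρ1 ρ2 cl cu ξ := by
  simp only [mfun, mfunSlope, theta]
  ring

theorem sigma2_eq_sq_mul_sigma2Coeff (ξ : ℝ) :
    sigma2 p C v ρ1 ρ2 cl cu ξ = ξ ^ 2 * sigma2Coeff p C v ρ1 ρ2 cl cu ξ := by
  simp only [sigma2, sigma2Coeff, sfun, qfun]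
  ring

theorem mfunSlope_zero :
    mfunSlope p C v ρ1 ρ2 cl cu 0 = 2 * cl * (ρ1 * ρ2 * (v ⬝ᵥ v)) / cu := by
  simp [mfunSlope, theta]

theorem sigma2Coeff_zero :
    sigma2Coeff p C v ρ1 ρ2 cl cu 0 =
      (ρ1 * ρ2 * (2 * cl) ^ 2 * (ρ1 * ρ2 * (v ⬝ᵥ (C *ᵥ v)))
        + ρ1 * ρ2 * (4 * cl) * (trace (C ^ 2) / p)) / (cu * cu) := by
  simp [sigma2Coeff, mfun, theta, qfun]

variable {cu}

theorem continuousAt_mfun_zero (hcu : cu ≠ 0) :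
    ContinuousAt (mfun p C v ρ1 ρ2 cl cu) 0 := by
  have := continuousAt_resolv (p := p) (C := C) (ξ := 0) (by simp)
  unfold mfun theta
  fun_prop (disch := simp [hcu])

theorem continuousAt_mfunSlope_zero (hcu : cu ≠ 0) :
    ContinuousAt (mfunSlope p C v ρ1 ρ2 cl cu) 0 := by
  have := continuousAt_resolv (p := p) (C := C) (ξ := 0) (by simp)
  unfold mfunSlope theta
  fun_prop (disch := simp [hcu])

theorem continuousAt_sigma2Coeff_zero (hcu : cu ≠ 0) :
    ContinuousAt (sigma2Coeff p C v ρ1 ρ2 cl cu) 0 := by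
  have := continuousAt_resolv (p := p) (C := C) (ξ := 0) (by simp)
  have := continuousAt_mfun_zero p C v ρ1 ρ2 cl hcu
  unfold sigma2Coeff qfun
  fun_prop (disch := simp [hcu])

end

theorem stmt16_general (p : ℕ) (C : Matrix (Fin p) (Fin p) ℝ)
    (Δ : Fin p → ℝ) (hΔ : Δ ≠ 0) (ρ1 ρ2 cl cu : ℝ)
    (hρ1 : 0 < ρ1) (hρ2 : 0 < ρ2) (hcl : 0 < cl) (hcu : 0 < cu) :
    Filter.Tendsto
      (fun ξ => sigma2 p C Δ ρ1 ρ2 cl cu ξ / (mfun p C Δ ρ1 ρ2 cl cu ξ) ^ 2)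
      (nhdsWithin 0 (Set.Ioi 0))
      (nhds (Δ ⬝ᵥ (C *ᵥ Δ) / (∑ i, Δ i ^ 2) ^ 2 +
        Matrix.trace (C ^ 2) / (p * (∑ i, Δ i ^ 2) ^ 2 * ρ1 * ρ2 * cl))) := by
  have hΔΔ : Δ ⬝ᵥ Δ ≠ 0 := dotProduct_self_eq_zero.not.mpr hΔ
  have hslope : mfunSlope p C Δ ρ1 ρ2 cl cu 0 ≠ 0 := by
    rw [mfunSlope_zero]
    positivity
  have hlim := tendsto_sq_mul_div_mul_sq (continuousAt_sigma2Coeff_zero p C Δ ρ1 ρ2 cl hcu.ne')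
    (continuousAt_mfunSlope_zero p C Δ ρ1 ρ2 cl hcu.ne') hslope
  simp only [← sigma2_eq_sq_mul_sigma2Coeff, ← mfun_eq_mul_mfunSlope] at hlim
  have hvalue : sigma2Coeff p C Δ ρ1 ρ2 cl cu 0 / mfunSlope p C Δ ρ1 ρ2 cl cu 0 ^ 2 =
      Δ ⬝ᵥ (C *ᵥ Δ) / (∑ i, Δ i ^ 2) ^ 2 +
        Matrix.trace (C ^ 2) / (p * (∑ i, Δ i ^ 2) ^ 2 * ρ1 * ρ2 * cl) := by
    rw [sigma2Coeff_zero, mfunSlope_zero, show ∑ i, Δ i ^ 2 = Δ ⬝ᵥ Δ by simp [dotProduct, sq]]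
    field_simp
    ring
  exact hvalue ▸ hlim.mono_left (nhdsGT_le_nhdsNE 0)

/-- as `ξ → 0⁺`, the ratio `σ²(ξ)/m(ξ)²` converges to
`ΔᵀCΔ/‖Δ‖⁴ + tr(C²)/(p ‖Δ‖⁴ ρ₁ ρ₂ c_l)`, the inverse performance measure of
Laplacian regularization. -/
theorem stmt16 (p : ℕ) (hp : 0 < p) (C : Matrix (Fin p) (Fin p) ℝ) (hC : C.PosDef)
    (Δ : Fin p → ℝ) (hΔ : Δ ≠ 0) (ρ1 ρ2 cl cu : ℝ)
    (hρ1 : 0 < ρ1) (hρ2 : 0 < ρ2) (hcl : 0 < cl) (hcu : 0 < cu) :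
    Filter.Tendsto
      (fun ξ => sigma2 p C Δ ρ1 ρ2 cl cu ξ / (mfun p C Δ ρ1 ρ2 cl cu ξ) ^ 2)
      (nhdsWithin 0 (Set.Ioi 0))
      (nhds (Δ ⬝ᵥ (C *ᵥ Δ) / (∑ i, Δ i ^ 2) ^ 2 +
        Matrix.trace (C ^ 2) / (p * (∑ i, Δ i ^ 2) ^ 2 * ρ1 * ρ2 * cl))) :=
  stmt16_general p C Δ hΔ ρ1 ρ2 cl cu hρ1 hρ2 hcl hcu
end

section
/- Let p be a positive integer, C a real symmetric positive definite p×p matrix with largest eigenvalue λ_max(C), v ∈ ℝ^p nonzero, and ρ_1, ρ_2 > 0. Define θ(ξ) = ρ_1 ρ_2 ξ v^T (I_p − ξ C)^{−1} v, q(ξ) = (ξ²/p) tr(((I_p − ξ C)^{−1} C)²), s(ξ) = ρ_1 ρ_2 ξ² v^T (I_p − ξ C)^{−1} C (I_p − ξ C)^{−1} v, and for parameters c_l, c_u > 0 define m_{c_l,c_u}(ξ) = 2 c_l θ(ξ)/(c_u (1 − θ(ξ))) and σ²_{c_l,c_u}(ξ) = [ρ_1 ρ_2 (2 c_l + m_{c_l,c_u}(ξ)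 c_u)² s(ξ) + ρ_1 ρ_2 (4 c_l + m_{c_l,c_u}(ξ)² c_u) q(ξ)] / (c_u (c_u − q(ξ))). Fix ξ ∈ (0, 1/λ_max(C)) with θ(ξ) < 1 and q(ξ) < c_u. Then for any c_l' ≥ c_l and c_u' ≥ c_u with (c_l', c_u') ≠ (c_l, c_u), one has σ²_{c_l',c_u'}(ξ)/m_{c_l',c_u'}(ξ)² < σ²_{c_l,c_u}(ξ)/m_{c_l,c_u}(ξ)²; that is, at fixed ξ the variance-over-squared-mean ratio is strictly decreasing in both c_l and c_u. -/
open Matrix BigOperators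

/-!
With `κ(c_l) = (s + q (1 - θ)² / c_l) / θ²`, the ratio simplifies to
`σ² / m² = ρ₁ρ₂ (κ + q (κ + 1) / (c_u - q))`. Here `κ` is strictly decreasing in `c_l`, and for
`q > 0` the expression is increasing in `κ` and strictly decreasing in `c_u > q`. The matrices
only enter through the positivity of `θ`, `s` and `q`, which all follow from `I - ξC` being
positive definite: its eigenvalues are `1 - ξ λᵢ > 0`.
-/

namespace Matrix

variable {n : Type*} [Fintype n] [DecidableEq n]

lemma IsHermitian.posDef_one_sub_smul {C : Matrix n n ℝ} (hC : C.IsHermitian) {ξ : ℝ}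
    (hξ : ∀ i, ξ * hC.eigenvalues i < 1) : ((1 : Matrix n n ℝ) - ξ • C).PosDef := by
  have hdiag : (1 : Matrix n n ℝ) - ξ • C = Unitary.conjStarAlgAut ℝ _ hC.eigenvectorUnitary
      (diagonal fun i => 1 - ξ * hC.eigenvalues i) := by
    conv_lhs => rw [hC.spectral_theorem]
    rw [← map_smul, ← map_one (Unitary.conjStarAlgAut ℝ _ hC.eigenvectorUnitary), ← map_sub]
    congr 1
    ext i j
    by_cases hij : i = j <;> simp [hij]
  rw [hdiag, Unitary.conjStarAlgAut_apply,
    IsUnit.posDef_star_right_conjugate_iff Unitary.isUnit_coe, posDef_diagonal_iff]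
  exact fun i => sub_pos.mpr (hξ i)

lemma commute_inv_one_sub_smul {R : Type*} [CommRing R] (C : Matrix n n R) (ξ : R) :
    Commute C ((1 - ξ • C)⁻¹) := by
  simpa only [zpow_neg_one] using
    Commute.zpow_right ((Commute.one_right C).sub_right ((Commute.refl C).smul_right ξ)) (-1)

lemma IsHermitian.trace_sq_pos {R : Type*} [CommRing R] [PartialOrder R] [StarRing R]
    [StarOrderedRing R] [NoZeroDivisors R] {M : Matrix n n R} (hM : M.IsHermitian)
    (h0 : M ≠ 0) : 0 < (M ^ 2).trace := by
  rw [sq]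
  nth_rewrite 1 [← hM]
  exact (posSemidef_conjTranspose_mul_self M).trace_nonneg.lt_of_ne
    (Ne.symm (trace_conjTranspose_mul_self_eq_zero_iff.not.mpr h0))

end Matrix

section Positivity

variable {p : ℕ} {C : Matrix (Fin p) (Fin p) ℝ} {v : Fin p → ℝ} {ρ1 ρ2 ξ : ℝ}

lemma theta_pos (hρ1 : 0 < ρ1) (hρ2 : 0 < ρ2) (hξ : 0 < ξ)
    (hA : ((1 : Matrix (Fin p) (Fin p) ℝ) - ξ • C).PosDef) (hv : v ≠ 0) :
    0 < theta p C v ρ1 ρ2 ξ := by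
  have hvRv : 0 < v ⬝ᵥ (resolv p C ξ *ᵥ v) := by
    simpa only [resolv, star_trivial] using hA.inv.dotProduct_mulVec_pos hv
  unfold theta
  positivity

lemma sfun_pos (hρ1 : 0 < ρ1) (hρ2 : 0 < ρ2) (hξ : ξ ≠ 0) (hC : C.PosDef)
    (hA : ((1 : Matrix (Fin p) (Fin p) ℝ) - ξ • C).PosDef) (hv : v ≠ 0) :
    0 < sfun p C v ρ1 ρ2 ξ := by
  have hR := hA.inv
  have hRCR : (resolv p C ξ * C * resolv p C ξ).PosDef := by
    simpa only [resolv, hR.isHermitian.eq] using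
      hC.conjTranspose_mul_mul_same (mulVec_injective_iff_isUnit.mpr hR.isUnit)
  have hvRCRv := hRCR.dotProduct_mulVec_pos hv
  rw [star_trivial] at hvRCRv
  unfold sfun
  positivity

lemma qfun_pos (hp : 0 < p) (hξ : ξ ≠ 0) (hC : C.PosDef)
    (hA : ((1 : Matrix (Fin p) (Fin p) ℝ) - ξ • C).PosDef) :
    0 < qfun p C ξ := by
  have hR := hA.inv
  have hC0 : C ≠ 0 := by
    have : Nonempty (Fin p) := ⟨⟨0, hp⟩⟩
    rintro rfl
    simpa using hC.det_pos
  have hRC : (resolv p C ξ * C).IsHermitian :=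
    (hR.isHermitian.commute_iff hC.isHermitian).mp (commute_inv_one_sub_smul C ξ).symm
  have htr := hRC.trace_sq_pos (hR.isUnit.mul_right_eq_zero.not.mpr hC0)
  have hp' : (0 : ℝ) < p := Nat.cast_pos.mpr hp
  unfold qfun
  positivity

end Positivity

lemma mul_lt_one_of_isGreatest {S : Set ℝ} {lmax ξ : ℝ} (hlmax : IsGreatest S lmax)
    (hξ : ξ ∈ Set.Ioo 0 lmax⁻¹) {x : ℝ} (hx : x ∈ S) : ξ * x < 1 := by
  have hl : 0 < lmax := inv_pos.mp (hξ.1.trans hξ.2)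
  calc ξ * x ≤ ξ * lmax := mul_le_mul_of_nonneg_left (hlmax.2 hx) hξ.1.le
    _ < lmax⁻¹ * lmax := by gcongr; exact hξ.2
    _ = 1 := inv_mul_cancel₀ hl.ne'

lemma add_mul_add_one_div_sub_lt {q κ κ' b b' : ℝ} (hq : 0 < q) (hb : q < b) (hκ' : -1 < κ')
    (hκ : κ' ≤ κ) (hbb : b ≤ b') (hlt : κ' < κ ∨ b < b') :
    κ' + q * (κ' + 1) / (b' - q) < κ + q * (κ + 1) / (b - q) := by
  have hb' : 0 < b - q := sub_pos.mpr hb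
  have hnum : 0 < q * (κ' + 1) := by nlinarith
  have hnum' : 0 < q * (κ + 1) := by nlinarith
  have hfrac : q * (κ' + 1) / (b' - q) ≤ q * (κ + 1) / (b - q) := by gcongr
  rcases hlt with hκlt | hblt
  · linarith
  · have : q * (κ' + 1) / (b' - q) < q * (κ' + 1) / (b - q) := by gcongr
    have : q * (κ' + 1) / (b - q) ≤ q * (κ + 1) / (b - q) := by gcongr
    linarith

section Ratio

variable (p : ℕ) (C : Matrix (Fin p) (Fin p) ℝ) (v : Fin p → ℝ) (ρ1 ρ2 : ℝ)

noncomputable def kappa (cl ξ : ℝ) : ℝ :=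
  (sfun p C v ρ1 ρ2 ξ + qfun p C ξ * (1 - theta p C v ρ1 ρ2 ξ) ^ 2 / cl) /
    theta p C v ρ1 ρ2 ξ ^ 2

variable {p C v ρ1 ρ2}

lemma sigma2_div_mfun_sq {cl cu ξ : ℝ} (hθ0 : theta p C v ρ1 ρ2 ξ ≠ 0)
    (hθ1 : theta p C v ρ1 ρ2 ξ ≠ 1) (hcl : cl ≠ 0) (hcu : cu ≠ 0)
    (hq : qfun p C ξ ≠ cu) :
    sigma2 p C v ρ1 ρ2 cl cu ξ / mfun p C v ρ1 ρ2 cl cu ξ ^ 2 =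
      ρ1 * ρ2 * (kappa p C v ρ1 ρ2 cl ξ +
        qfun p C ξ * (kappa p C v ρ1 ρ2 cl ξ + 1) / (cu - qfun p C ξ)) := by
  unfold sigma2 mfun kappa
  generalize theta p C v ρ1 ρ2 ξ = θ at *
  generalize qfun p C ξ = q at *
  have h1θ : 1 - θ ≠ 0 := sub_ne_zero.mpr (Ne.symm hθ1)
  have hcuq : cu - q ≠ 0 := sub_ne_zero.mpr (Ne.symm hq)
  field_simp
  ring

lemma kappa_strictAntiOn {ξ : ℝ} (hθ0 : theta p C v ρ1 ρ2 ξ ≠ 0)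
    (hθ1 : theta p C v ρ1 ρ2 ξ ≠ 1) (hq : 0 < qfun p C ξ) :
    StrictAntiOn (fun cl => kappa p C v ρ1 ρ2 cl ξ) (Set.Ioi 0) := by
  intro a ha b _ hab
  have h1θ : 1 - theta p C v ρ1 ρ2 ξ ≠ 0 := sub_ne_zero.mpr (Ne.symm hθ1)
  simp only [kappa]
  gcongr

theorem stmt17_general (p : ℕ) (hp : 0 < p) (C : Matrix (Fin p) (Fin p) ℝ) (hC : C.PosDef)
    (lmax : ℝ) (hlmax : IsGreatest (Set.range hC.1.eigenvalues) lmax)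
    (v : Fin p → ℝ) (hv : v ≠ 0) (ρ1 ρ2 cl cu : ℝ)
    (hρ1 : 0 < ρ1) (hρ2 : 0 < ρ2) (hcl : 0 < cl)
    (ξ : ℝ) (hξ : ξ ∈ Set.Ioo (0 : ℝ) lmax⁻¹)
    (hθ : theta p C v ρ1 ρ2 ξ < 1) (hq : qfun p C ξ < cu)
    (cl' cu' : ℝ) (hcl' : cl ≤ cl') (hcu' : cu ≤ cu') (hne : (cl', cu') ≠ (cl, cu)) :
    sigma2 p C v ρ1 ρ2 cl' cu' ξ / (mfun p C v ρ1 ρ2 cl' cu' ξ) ^ 2 <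
    sigma2 p C v ρ1 ρ2 cl cu ξ / (mfun p C v ρ1 ρ2 cl cu ξ) ^ 2 := by
  have hA := hC.1.posDef_one_sub_smul fun i => mul_lt_one_of_isGreatest hlmax hξ ⟨i, rfl⟩
  have hθ0 := theta_pos hρ1 hρ2 hξ.1 hA hv
  have hs := sfun_pos hρ1 hρ2 hξ.1.ne' hC hA hv
  have hq0 := qfun_pos hp hξ.1.ne' hC hA
  have hcl'0 : 0 < cl' := hcl.trans_le hcl'
  have hq' : qfun p C ξ < cu' := hq.trans_le hcu'
  have hκ := kappa_strictAntiOn hθ0.ne' hθ.ne hq0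
  rw [sigma2_div_mfun_sq hθ0.ne' hθ.ne hcl.ne' (hq0.trans hq).ne' hq.ne,
    sigma2_div_mfun_sq hθ0.ne' hθ.ne hcl'0.ne' (hq0.trans hq').ne' hq'.ne]
  refine mul_lt_mul_of_pos_left (add_mul_add_one_div_sub_lt hq0 hq ?_
    (hκ.antitoneOn hcl hcl'0 hcl') hcu' ?_) (by positivity)
  · have : 0 < kappa p C v ρ1 ρ2 cl' ξ := by unfold kappa; positivity
    linarith
  · rcases hcl'.lt_or_eq with hlt | rfl
    · exact .inl (hκ hcl hcl'0 hlt)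
    · exact .inr (hcu'.lt_of_ne fun h => hne (by rw [h]))

/-- at a fixed `ξ ∈ (0, 1/λ_max(C))` with `θ(ξ) < 1` and `q(ξ) < c_u`, the
variance-over-squared-mean ratio `σ²_{c_l,c_u}(ξ)/m_{c_l,c_u}(ξ)²` is strictly decreasing
in both `c_l` and `c_u`: for `c_l' ≥ c_l`, `c_u' ≥ c_u` with `(c_l', c_u') ≠ (c_l, c_u)`,
the ratio at `(c_l', c_u')` is strictly smaller than at `(c_l, c_u)`. -/
theorem stmt17 (p : ℕ) (hp : 0 < p) (C : Matrix (Fin p) (Fin p) ℝ) (hC : C.PosDef)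
    (lmax : ℝ) (hlmax : IsGreatest (Set.range hC.1.eigenvalues) lmax)
    (v : Fin p → ℝ) (hv : v ≠ 0) (ρ1 ρ2 cl cu : ℝ)
    (hρ1 : 0 < ρ1) (hρ2 : 0 < ρ2) (hcl : 0 < cl) (hcu : 0 < cu)
    (ξ : ℝ) (hξ : ξ ∈ Set.Ioo (0 : ℝ) lmax⁻¹)
    (hθ : theta p C v ρ1 ρ2 ξ < 1) (hq : qfun p C ξ < cu)
    (cl' cu' : ℝ) (hcl' : cl ≤ cl') (hcu' : cu ≤ cu') (hne : (cl', cu') ≠ (cl, cu)) :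
    sigma2 p C v ρ1 ρ2 cl' cu' ξ / (mfun p C v ρ1 ρ2 cl' cu' ξ) ^ 2 <
    sigma2 p C v ρ1 ρ2 cl cu ξ / (mfun p C v ρ1 ρ2 cl cu ξ) ^ 2 :=
  stmt17_general p hp C hC lmax hlmax v hv ρ1 ρ2 cl cu hρ1 hρ2 hcl ξ hξ hθ hq cl' cu' hcl' hcu' hne
end Ratio
end
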